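/- arXiv:2009.09249 — 4 statements merged into one kernel-verified Lean document; each statement's English description precedes it below -/
import Mathlib

section
/- For every α with 0 < α ≤ 1/2 there exists a constant K > 0 such that: for every natural number I, every real T with 2^I ≤ T, every real C ≥ 1, and all natural numbers C_0, …, C_I with C_i ≥ 1 for each i and ∑_{i=0}^I (C_i − 1) ≤ C − 1, it holds that ∑_{i=0}^I C_i^α · (2^i)^(1−α) ≤ K · C^α · T^(1−α). -/
/-! Each run has `C_i ≤ C`, so its regret is at most `C^α · r^i` with `r = 2^(1-α) > 1`.
Summing this geometric series over `i ≤ I` loses only the factor `r / (r - 1)`,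
and `r^I = (2^I)^(1-α) ≤ T^(1-α)`. -/

open Real Finset

lemma geom_sum_range_succ_le_of_one_lt {r : ℝ} (hr : 1 < r) (n : ℕ) :
    ∑ i ∈ range (n + 1), r ^ i ≤ r / (r - 1) * r ^ n := by
  have hr' : 0 < r - 1 := sub_pos.2 hr
  rw [geom_sum_eq hr.ne', div_mul_eq_mul_div, pow_succ']
  gcongr
  linarith

lemma le_of_sum_sub_one_le {ι : Type*} {s : Finset ι} {f : ι → ℝ} {C : ℝ}
    (hf : ∀ j ∈ s, 1 ≤ f j) (hsum : ∑ j ∈ s, (f j - 1) ≤ C - 1) {i : ι} (hi : i ∈ s) :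
    f i ≤ C := by
  have : f i - 1 ≤ ∑ j ∈ s, (f j - 1) :=
    single_le_sum (fun j hj => sub_nonneg.2 (hf j hj)) hi
  linarith

theorem stmt_1 (α : ℝ) (hα : 0 < α) (hα' : α ≤ 1 / 2) :
    ∃ K : ℝ, 0 < K ∧
      ∀ (I : ℕ) (T : ℝ), (2: ℝ) ^ I ≤ T →
        ∀ (C : ℝ), 1 ≤ C →
          ∀ (Ci : Fin (I + 1) → ℕ), (∀ i, 1 ≤ Ci i) →
            (∑ i, ((Ci i : ℝ) - 1)) ≤ C - 1 →
            ∑ i : Fin (I + 1), (Ci i : ℝ) ^ α * ((2 : ℝ) ^ (i : ℕ)) ^ (1 - α)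
              ≤ K * C ^ α * T ^ (1 - α) := by
  set r : ℝ := 2 ^ (1 - α)
  have hr : 1 < r := one_lt_rpow (by norm_num) (by linarith)
  refine ⟨r / (r - 1), div_pos (by linarith) (sub_pos.2 hr), ?_⟩
  intro I T hT C hC Ci hCi hsum
  have hCi_le : ∀ i, (Ci i : ℝ) ≤ C := fun i =>
    le_of_sum_sub_one_le (fun j _ => by exact_mod_cast hCi j) hsum (mem_univ i)
  calc ∑ i : Fin (I + 1), (Ci i : ℝ) ^ α * ((2 : ℝ) ^ (i : ℕ)) ^ (1 - α)
      ≤ ∑ i : Fin (I + 1), C ^ α * r ^ (i : ℕ) := by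
        gcongr with i
        · exact hCi_le i
        · rw [rpow_pow_comm zero_le_two]
    _ = C ^ α * ∑ i ∈ range (I + 1), r ^ i := by
        rw [mul_sum, Fin.sum_univ_eq_sum_range (fun i => C ^ α * r ^ i)]
    _ ≤ C ^ α * (r / (r - 1) * r ^ I) := by
        gcongr
        exact geom_sum_range_succ_le_of_one_lt hr I
    _ = r / (r - 1) * C ^ α * ((2 : ℝ) ^ I) ^ (1 - α) := by
        rw [← rpow_pow_comm zero_le_two]; ring
    _ ≤ r / (r - 1) * C ^ α * T ^ (1 - α) := by
        gcongr
        linarith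
end

section
/- Exponentially weighted average forecaster: given N ≥ 1 experts, a horizon T ≥ 1, a learning rate η > 0, and losses ℓ_{i,t} ∈ [0,1] for i ∈ {1,…,N}, t ∈ {1,…,T}, define weights p_{i,t} = exp(−η ∑_{s<t} ℓ_{i,s}) / ∑_{j=1}^N exp(−η ∑_{s<t} ℓ_{j,s}). Then ∑_{t=1}^T ∑_{i=1}^N p_{i,t} ℓ_{i,t} − min_{i} ∑_{t=1}^T ℓ_{i,t} ≤ (log N)/η + η·T/8. -/
open Real Finset

/-! Let `W_t = ∑ⱼ exp (-η Lⱼ(t))`, where `Lⱼ(t)` is the cumulative loss of expert `j` before round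
`t`. Then `log W_0 = log N` and `log W_T ≥ -η Lᵢ(T)` for every expert `i`. The ratio `W_{t+1} / W_t`
is the `p_t`-average of `exp (-η ℓⱼ(t))`, which Hoeffding's lemma bounds by
`exp (-η ∑ⱼ pⱼ(t) ℓⱼ(t) + η² / 8)`; summing the logarithms over the `T` rounds and dividing by `η`
gives the bound. -/

/-- Hoeffding's lemma for a probability vector `w` on a finite type. -/
theorem sum_mul_exp_mul_le_of_mem_Icc {ι : Type*} [Fintype ι] {w x : ι → ℝ} {a b : ℝ}
    (hw : ∀ i, 0 ≤ w i) (hw1 : ∑ i, w i = 1) (hx : ∀ i, x i ∈ Set.Icc a b) (t : ℝ) :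
    ∑ i, w i * exp (t * x i) ≤ exp (t * ∑ i, w i * x i + (b - a) ^ 2 * t ^ 2 / 8) := by
  let _ : MeasurableSpace ι := ⊤
  let P : PMF ι := PMF.ofFintype (fun i ↦ ENNReal.ofReal (w i)) <| by
    rw [← ENNReal.ofReal_sum_of_nonneg fun i _ ↦ hw i, hw1, ENNReal.ofReal_one]
  have hP (f : ι → ℝ) : ∫ i, f i ∂P.toMeasure = ∑ i, w i * f i := by
    simp [P, PMF.integral_eq_sum, ENNReal.toReal_ofReal (hw _)]
  have hoeffding := (ProbabilityTheory.hasSubgaussianMGF_of_mem_Icc (μ := P.toMeasure)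
    (measurable_of_countable x).aemeasurable (MeasureTheory.ae_of_all _ hx)).mgf_le t
  simp only [ProbabilityTheory.mgf, hP] at hoeffding
  have hc : (((‖b - a‖₊ / 2) ^ 2 : NNReal) : ℝ) * t ^ 2 / 2 = (b - a) ^ 2 * t ^ 2 / 8 := by
    push_cast [coe_nnnorm, norm_eq_abs, div_pow, sq_abs]
    ring
  rw [hc] at hoeffding
  set m := ∑ i, w i * x i
  calc ∑ i, w i * exp (t * x i) = exp (t * m) * ∑ i, w i * exp (t * (x i - m)) := by
        rw [mul_sum]
        refine sum_congr rfl fun i _ ↦ ?_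
        rw [mul_left_comm, ← exp_add]
        ring_nf
    _ ≤ exp (t * m) * exp ((b - a) ^ 2 * t ^ 2 / 8) := by gcongr
    _ = exp (t * m + (b - a) ^ 2 * t ^ 2 / 8) := (exp_add _ _).symm

section ExponentialWeights

variable {ι : Type*} [Fintype ι] (η : ℝ) (ℓ : ι → ℕ → ℝ)

noncomputable def expWeightSum (t : ℕ) : ℝ := ∑ j, exp (-η * ∑ s ∈ range t, ℓ j s)

noncomputable def expWeight (i : ι) (t : ℕ) : ℝ :=
  exp (-η * ∑ s ∈ range t, ℓ i s) / expWeightSum η ℓ t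

theorem expWeightSum_pos [Nonempty ι] (t : ℕ) : 0 < expWeightSum η ℓ t :=
  sum_pos (fun _ _ ↦ exp_pos _) univ_nonempty

theorem expWeightSum_zero : expWeightSum η ℓ 0 = Fintype.card ι := by
  simp [expWeightSum]

theorem expWeight_nonneg (i : ι) (t : ℕ) : 0 ≤ expWeight η ℓ i t :=
  div_nonneg (exp_pos _).le (sum_nonneg fun _ _ ↦ (exp_pos _).le)

theorem sum_expWeight [Nonempty ι] (t : ℕ) : ∑ i, expWeight η ℓ i t = 1 := by
  simp only [expWeight, ← sum_div]
  exact div_self (expWeightSum_pos η ℓ t).ne'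

theorem expWeightSum_succ [Nonempty ι] (t : ℕ) :
    expWeightSum η ℓ (t + 1) =
      expWeightSum η ℓ t * ∑ i, expWeight η ℓ i t * exp (-η * ℓ i t) := by
  have hW := (expWeightSum_pos η ℓ t).ne'
  unfold expWeight
  rw [mul_sum]
  refine sum_congr rfl fun i _ ↦ ?_
  rw [sum_range_succ, mul_add, exp_add]
  field_simp

theorem log_expWeightSum_succ_le [Nonempty ι] {t : ℕ} (ht : ∀ i, ℓ i t ∈ Set.Icc 0 1) :
    log (expWeightSum η ℓ (t + 1)) ≤
      log (expWeightSum η ℓ t) - η * ∑ i, expWeight η ℓ i t * ℓ i t + η ^ 2 / 8 := by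
  have hoeffding := sum_mul_exp_mul_le_of_mem_Icc (expWeight_nonneg η ℓ · t)
    (sum_expWeight η ℓ t) ht (-η)
  have hW := expWeightSum_pos η ℓ t
  calc log (expWeightSum η ℓ (t + 1))
      ≤ log (expWeightSum η ℓ t * exp (-η * ∑ i, expWeight η ℓ i t * ℓ i t + η ^ 2 / 8)) := by
        refine log_le_log (expWeightSum_pos η ℓ _) ?_
        rw [expWeightSum_succ]
        gcongr
        exact hoeffding.trans_eq (by ring_nf)
    _ = _ := by
        rw [log_mul hW.ne' (exp_pos _).ne', log_exp]
        ring

theorem log_expWeightSum_le [Nonempty ι] {T : ℕ} (hℓ : ∀ i t, t < T → ℓ i t ∈ Set.Icc 0 1) :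
    log (expWeightSum η ℓ T) ≤ log (Fintype.card ι) -
      η * ∑ t ∈ range T, ∑ i, expWeight η ℓ i t * ℓ i t + T * (η ^ 2 / 8) := by
  induction T with
  | zero => simp [expWeightSum_zero]
  | succ T ih =>
    have hstep := log_expWeightSum_succ_le η ℓ (hℓ · T (Nat.lt_succ_self T))
    have ih := ih fun i t ht ↦ hℓ i t (ht.trans (Nat.lt_succ_self T))
    rw [sum_range_succ]
    push_cast
    linarith

theorem neg_mul_sum_le_log_expWeightSum (i : ι) (t : ℕ) :
    -η * ∑ s ∈ range t, ℓ i s ≤ log (expWeightSum η ℓ t) := by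
  rw [← log_exp (-η * _)]
  exact log_le_log (exp_pos _) <|
    single_le_sum (f := fun j ↦ exp (-η * ∑ s ∈ range t, ℓ j s)) (fun _ _ ↦ (exp_pos _).le)
      (mem_univ i)

theorem sum_expWeight_mul_sub_le [Nonempty ι] {η : ℝ} (hη : 0 < η) {T : ℕ}
    (hℓ : ∀ i t, t < T → ℓ i t ∈ Set.Icc 0 1) (i : ι) :
    ∑ t ∈ range T, ∑ j, expWeight η ℓ j t * ℓ j t - ∑ t ∈ range T, ℓ i t ≤
      log (Fintype.card ι) / η + η * T / 8 := by
  have hlog := (neg_mul_sum_le_log_expWeightSum η ℓ i T).trans (log_expWeightSum_le η ℓ hℓ)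
  rw [← mul_le_mul_iff_right₀ hη]
  field_simp
  linarith

end ExponentialWeights

theorem stmt_5_general (N T : ℕ) (hN : 1 ≤ N)
    (η : ℝ) (hη : 0 < η)
    (ℓ : Fin N → ℕ → ℝ) (hℓ : ∀ i t, t < T → ℓ i t ∈ Set.Icc (0 : ℝ) 1)
    (p : Fin N → ℕ → ℝ)
    (hp : ∀ i t, p i t =
      Real.exp (-η * ∑ s ∈ Finset.range t, ℓ i s) /
        ∑ j, Real.exp (-η * ∑ s ∈ Finset.range t, ℓ j s)) :
    ∑ t ∈ Finset.range T, ∑ i, p i t * ℓ i t -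
        Finset.univ.inf' (Finset.univ_nonempty_iff.mpr (Fin.pos_iff_nonempty.mp hN))
          (fun i => ∑ t ∈ Finset.range T, ℓ i t)
      ≤ Real.log N / η + η * T / 8 := by
  obtain rfl : p = expWeight η ℓ := funext₂ hp
  have : Nonempty (Fin N) := Fin.pos_iff_nonempty.mp hN
  obtain ⟨i, -, hi⟩ := exists_mem_eq_inf' univ_nonempty fun i ↦ ∑ t ∈ range T, ℓ i t
  rw [hi]
  simpa using sum_expWeight_mul_sub_le ℓ hη hℓ i

theorem stmt_5 (N T : ℕ) (hN : 1 ≤ N) (hT : 1 ≤ T)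
    (η : ℝ) (hη : 0 < η)
    (ℓ : Fin N → ℕ → ℝ) (hℓ : ∀ i t, t < T → ℓ i t ∈ Set.Icc (0 : ℝ) 1)
    (p : Fin N → ℕ → ℝ)
    (hp : ∀ i t, p i t =
      Real.exp (-η * ∑ s ∈ Finset.range t, ℓ i s) /
        ∑ j, Real.exp (-η * ∑ s ∈ Finset.range t, ℓ j s)) :
    ∑ t ∈ Finset.range T, ∑ i, p i t * ℓ i t -
        Finset.univ.inf' (Finset.univ_nonempty_iff.mpr (Fin.pos_iff_nonempty.mp hN))
          (fun i => ∑ t ∈ Finset.range T, ℓ i t)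
      ≤ Real.log N / η + η * T / 8 :=
  stmt_5_general N T hN η hη ℓ hℓ p hp
end

section
/- Fixed-share (switching) forecaster: given N ≥ 2 experts, a horizon T ≥ 1, losses ℓ_{i,t} ∈ [0,1], a learning rate η > 0 and a sharing parameter σ ∈ (0,1), define p_{i,1} = 1/N and p_{i,t+1} = (1−σ)·p_{i,t}·exp(−η ℓ_{i,t})/Z_t + σ/N, where Z_t = ∑_{j=1}^N p_{j,t}·exp(−η ℓ_{j,t}). Then for every comparator sequence i_1, …, i_T ∈ {1,…,N} with s = |{t < T : i_{t+1} ≠ i_t}| switches: ∑_{t=1}^T ∑_{j=1}^N p_{j,t} ℓ_{j,t} − ∑_{t=1}^T ℓ_{i_t,t} ≤ ( (s+1)·log N + s·log(1/σ) + (T−1−s)·log(1/(1−σ)) )/η + η·T/8. -/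
open Real Finset MeasureTheory ProbabilityTheory

/-!
Fixed share keeps a `σ / N` floor under every weight and otherwise shrinks the exponential-weights
posterior by `1 - σ`. Hence, following the comparator, the log-weight of its current expert changes
in round `t` by at least `log c_t - η ℓ_{i_t,t} - log Z_t`, where `c_t = σ / N` on a switch and
`1 - σ` otherwise. Telescoping from `log (1 / N)`, and using that the weight in the last round is at
most `exp (η ℓ) Z`, gives `∑ₜ log c_t - log N ≤ η ∑ₜ ℓ_{i_t,t} + ∑ₜ log Z_t`. Hoeffding's lemma for
the law `p_t` bounds `log Z_t ≤ -η ⟨p_t, ℓ_t⟩ + η² / 8`, and the bound follows.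
-/

theorem sum_mul_exp_le_of_mem_Icc {ι : Type*} [Fintype ι] {w x : ι → ℝ} (hw : ∀ i, 0 ≤ w i)
    (hw₁ : ∑ i, w i = 1) {a b : ℝ} (hx : ∀ i, x i ∈ Set.Icc a b) (t : ℝ) :
    ∑ i, w i * exp (t * x i) ≤ exp (t * ∑ i, w i * x i + (b - a) ^ 2 * t ^ 2 / 8) := by
  let _ : MeasurableSpace ι := ⊤
  have _ : DiscreteMeasurableSpace ι := ⟨fun _ ↦ trivial⟩
  let P : PMF ι := PMF.ofFintype (fun i ↦ ENNReal.ofReal (w i)) (by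
    rw [← ENNReal.ofReal_sum_of_nonneg fun i _ ↦ hw i, hw₁, ENNReal.ofReal_one])
  have hP (i : ι) : (P i).toReal = w i := ENNReal.toReal_ofReal (hw i)
  have hmean : P.toMeasure[x] = ∑ i, w i * x i := by simp [PMF.integral_eq_sum, hP]
  have hmgf : mgf x P.toMeasure t = ∑ i, w i * exp (t * x i) := by
    simp [mgf, PMF.integral_eq_sum, hP]
  have hoeffding := (hasSubgaussianMGF_of_mem_Icc (measurable_of_finite x).aemeasurable
    (ae_of_all P.toMeasure hx)).mgf_le t
  simp only [sub_eq_add_neg, mgf_add_const, hmgf, hmean] at hoeffding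
  rw [← le_div_iff₀ (exp_pos _), ← exp_sub] at hoeffding
  refine hoeffding.trans_eq (congrArg exp ?_)
  simp only [NNReal.coe_pow, NNReal.coe_div, coe_nnnorm, NNReal.coe_ofNat, Real.norm_eq_abs,
    div_pow, sq_abs]
  ring

theorem sum_ite_const_eq {α R : Type*} [CommRing R] (s : Finset α) {P : α → Prop}
    [DecidablePred P] (a b : R) :
    ∑ t ∈ s, (if P t then a else b) = #{t ∈ s | P t} * a + (#s - #{t ∈ s | P t}) * b := by
  have hcard : (#{t ∈ s | P t} : R) + #{t ∈ s | ¬P t} = #s := by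
    rw [← Nat.cast_add, card_filter_add_card_filter_not]
  rw [sum_ite, sum_const, sum_const, nsmul_eq_mul, nsmul_eq_mul]
  linear_combination b * hcard

section FixedShare

variable {N t : ℕ} {η σ : ℝ} {ℓ p : Fin N → ℕ → ℝ}

noncomputable def normalizer (η : ℝ) (ℓ p : Fin N → ℕ → ℝ) (t : ℕ) : ℝ :=
  ∑ j, p j t * exp (-η * ℓ j t)

-- A lower bound on the fraction of the posterior weight of `i` that reaches `j` in one round.
noncomputable def shareFactor (σ : ℝ) (i j : Fin N) : ℝ := if j ≠ i then σ / N else 1 - σ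

structure IsFixedShare (η σ : ℝ) (ℓ p : Fin N → ℕ → ℝ) : Prop where
  init : ∀ i, p i 0 = 1 / N
  update : ∀ i t, p i (t + 1) = (1 - σ) * p i t * exp (-η * ℓ i t) / normalizer η ℓ p t + σ / N

theorem normalizer_pos [NeZero N] (hp : ∀ j, 0 < p j t) : 0 < normalizer η ℓ p t :=
  sum_pos (fun j _ ↦ mul_pos (hp j) (exp_pos _)) univ_nonempty

theorem mul_exp_le_normalizer (hp : ∀ j, 0 ≤ p j t) (i : Fin N) :
    p i t * exp (-η * ℓ i t) ≤ normalizer η ℓ p t :=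
  single_le_sum (f := fun j ↦ p j t * exp (-η * ℓ j t))
    (fun j _ ↦ mul_nonneg (hp j) (exp_pos _).le) (mem_univ i)

theorem log_le_add_log_normalizer (hp : ∀ j, 0 < p j t) (i : Fin N) :
    log (p i t) ≤ η * ℓ i t + log (normalizer η ℓ p t) := by
  have := log_le_log (mul_pos (hp i) (exp_pos _))
    (mul_exp_le_normalizer (η := η) (ℓ := ℓ) (fun j ↦ (hp j).le) i)
  rw [log_mul (hp i).ne' (exp_pos _).ne', log_exp] at this
  linarith

theorem log_normalizer_le [NeZero N] (hp : ∀ j, 0 < p j t) (hp₁ : ∑ j, p j t = 1)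
    (hℓ : ∀ j, ℓ j t ∈ Set.Icc 0 1) :
    log (normalizer η ℓ p t) ≤ -η * ∑ j, p j t * ℓ j t + η ^ 2 / 8 := by
  rw [log_le_iff_le_exp (normalizer_pos hp)]
  simpa [normalizer] using sum_mul_exp_le_of_mem_Icc (fun j ↦ (hp j).le) hp₁ hℓ (-η)

namespace IsFixedShare

theorem pos (h : IsFixedShare η σ ℓ p) (hN : 0 < N) (hσ₀ : 0 < σ) (hσ₁ : σ ≤ 1) (t : ℕ)
    (j : Fin N) : 0 < p j t := by
  have : NeZero N := ⟨hN.ne'⟩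
  have hN' : (0 : ℝ) < N := Nat.cast_pos.2 hN
  induction t generalizing j with
  | zero => rw [h.init]; positivity
  | succ t ih =>
    have hZ := normalizer_pos (η := η) (ℓ := ℓ) ih
    have h1σ : 0 ≤ 1 - σ := by linarith
    rw [h.update]
    have := ih j
    positivity

theorem sum_eq_one (h : IsFixedShare η σ ℓ p) (hN : 0 < N) (hσ₀ : 0 < σ) (hσ₁ : σ ≤ 1)
    (t : ℕ) : ∑ j, p j t = 1 := by
  have hN' : (N : ℝ) ≠ 0 := (Nat.cast_pos.2 hN).ne'
  cases t with
  | zero => simp [h.init, hN']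
  | succ t =>
    have : NeZero N := ⟨hN.ne'⟩
    have hZ := (normalizer_pos (η := η) (ℓ := ℓ) (h.pos hN hσ₀ hσ₁ t)).ne'
    simp only [h.update, sum_add_distrib, ← sum_div, mul_assoc, ← mul_sum, sum_const, card_univ,
      Fintype.card_fin, nsmul_eq_mul]
    rw [← normalizer]
    field_simp
    ring

theorem shareFactor_mul_posterior_le (h : IsFixedShare η σ ℓ p) (hN : 0 < N)
    (hσ : σ ∈ Set.Ioo 0 1) (i j : Fin N) (t : ℕ) :
    shareFactor σ i j * (p i t * exp (-η * ℓ i t) / normalizer η ℓ p t)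
      ≤ p j (t + 1) := by
  have : NeZero N := ⟨hN.ne'⟩
  have hp := h.pos hN hσ.1 hσ.2.le t
  have hZ := normalizer_pos (η := η) (ℓ := ℓ) hp
  have hshare : 0 < σ / N := div_pos hσ.1 (Nat.cast_pos.2 hN)
  unfold shareFactor
  split_ifs with hji
  · have hpost : p i t * exp (-η * ℓ i t) / normalizer η ℓ p t ≤ 1 :=
      (div_le_one hZ).2 (mul_exp_le_normalizer (fun j ↦ (hp j).le) i)
    have : 0 ≤ (1 - σ) * p j t * exp (-η * ℓ j t) / normalizer η ℓ p t := by
      have := hp j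
      have : 0 ≤ 1 - σ := by linarith [hσ.2]
      positivity
    rw [h.update]
    nlinarith
  · rw [not_not.1 hji, h.update, mul_div_assoc', ← mul_assoc]
    exact le_add_of_nonneg_right hshare.le

theorem log_shareFactor_sub_le_log_sub_log (h : IsFixedShare η σ ℓ p) (hN : 0 < N)
    (hσ : σ ∈ Set.Ioo 0 1) (i j : Fin N) (t : ℕ) :
    log (shareFactor σ i j) - η * ℓ i t - log (normalizer η ℓ p t)
      ≤ log (p j (t + 1)) - log (p i t) := by
  have : NeZero N := ⟨hN.ne'⟩
  have hp := h.pos hN hσ.1 hσ.2.le t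
  have hZ := normalizer_pos (η := η) (ℓ := ℓ) hp
  have hshare : 0 < shareFactor σ i j := by
    have := div_pos hσ.1 (Nat.cast_pos.2 hN)
    unfold shareFactor
    split_ifs <;> linarith [hσ.2]
  have hnum : 0 < p i t * exp (-η * ℓ i t) := mul_pos (hp i) (exp_pos _)
  have := log_le_log (by positivity) (h.shareFactor_mul_posterior_le hN hσ i j t)
  rw [log_mul hshare.ne' (by positivity), log_div hnum.ne' hZ.ne',
    log_mul (hp i).ne' (exp_pos _).ne', log_exp] at this
  linarith

theorem sum_log_shareFactor_sub_le (h : IsFixedShare η σ ℓ p) (hN : 0 < N)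
    (hσ : σ ∈ Set.Ioo 0 1) (it : ℕ → Fin N) (n : ℕ) :
    ∑ t ∈ range n, (log (shareFactor σ (it t) (it (t + 1)))
        - η * ℓ (it t) t - log (normalizer η ℓ p t))
      ≤ log (p (it n) n) + log N := by
  have hsteps := sum_le_sum fun t (_ : t ∈ range n) ↦
    h.log_shareFactor_sub_le_log_sub_log hN hσ (it t) (it (t + 1)) t
  rw [sum_range_sub (fun t ↦ log (p (it t) t)), h.init, one_div, log_inv] at hsteps
  linarith

theorem regret_le (h : IsFixedShare η σ ℓ p) (hN : 0 < N) (hσ : σ ∈ Set.Ioo 0 1) (n : ℕ)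
    (hℓ : ∀ i t, t ≤ n → ℓ i t ∈ Set.Icc 0 1) (it : ℕ → Fin N) :
    η * (∑ t ∈ range (n + 1), ∑ j, p j t * ℓ j t - ∑ t ∈ range (n + 1), ℓ (it t) t)
      ≤ log N - ∑ t ∈ range n, log (shareFactor σ (it t) (it (t + 1)))
        + (n + 1) * (η ^ 2 / 8) := by
  have : NeZero N := ⟨hN.ne'⟩
  have hp := h.pos hN hσ.1 hσ.2.le
  have hcomparator := h.sum_log_shareFactor_sub_le hN hσ it n
  have hlast := log_le_add_log_normalizer (η := η) (ℓ := ℓ) (hp n) (it n)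
  have hhoeffding := sum_le_sum fun t (ht : t ∈ range (n + 1)) ↦
    log_normalizer_le (η := η) (hp t) (h.sum_eq_one hN hσ.1 hσ.2.le t)
      fun j ↦ hℓ j t (Nat.lt_succ_iff.1 (mem_range.1 ht))
  rw [sum_sub_distrib, sum_sub_distrib, ← mul_sum] at hcomparator
  rw [sum_add_distrib, sum_const, card_range, nsmul_eq_mul, ← mul_sum, sum_range_succ] at hhoeffding
  rw [sum_range_succ (fun t ↦ ℓ (it t) t)]
  push_cast at hhoeffding
  linarith

end IsFixedShare

end FixedShare

theorem stmt_7 (N T : ℕ) (hN : 2 ≤ N) (hT : 1 ≤ T)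
    (ℓ : Fin N → ℕ → ℝ) (hℓ : ∀ i t, t < T → ℓ i t ∈ Set.Icc (0 : ℝ) 1)
    (η σ : ℝ) (hη : 0 < η) (hσ : σ ∈ Set.Ioo (0 : ℝ) 1)
    (p : Fin N → ℕ → ℝ)
    (hp0 : ∀ i, p i 0 = 1 / N)
    (hp : ∀ i t, p i (t + 1) =
      (1 - σ) * p i t * Real.exp (-η * ℓ i t) /
          (∑ j, p j t * Real.exp (-η * ℓ j t)) + σ / N)
    (it : ℕ → Fin N) (s : ℕ)
    (hs : s = ((Finset.range (T - 1)).filter (fun t => it (t + 1) ≠ it t)).card) :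
    ∑ t ∈ Finset.range T, ∑ j, p j t * ℓ j t - ∑ t ∈ Finset.range T, ℓ (it t) t
      ≤ (((s : ℝ) + 1) * Real.log N + (s : ℝ) * Real.log (1 / σ) +
            ((T : ℝ) - 1 - (s : ℝ)) * Real.log (1 / (1 - σ))) / η
        + η * T / 8 := by
  obtain ⟨n, rfl⟩ : ∃ n, T = n + 1 := ⟨T - 1, by omega⟩
  have hN₀ : 0 < N := by omega
  have hregret := IsFixedShare.regret_le ⟨hp0, hp⟩ hN₀ hσ n (fun i t ht ↦ hℓ i t (by omega)) it
  have hswitches : ∑ t ∈ range n, log (shareFactor σ (it t) (it (t + 1)))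
      = s * log (σ / N) + (n - s) * log (1 - σ) := by
    simp only [shareFactor, apply_ite log, sum_ite_const_eq, card_range, hs, Nat.add_sub_cancel]
  rw [hswitches, log_div hσ.1.ne' (Nat.cast_pos.2 hN₀).ne'] at hregret
  rw [one_div, log_inv, one_div, log_inv, div_add' _ _ _ hη.ne', le_div_iff₀ hη]
  push_cast
  linarith
end

section
/- Let T ≥ 2 and s be reals with 1 ≤ s ≤ T/2, let σ = s/T and η = √(s·log(T/s)/T). Then η·T/8 + ( s·log(T/s) + (T−1−s)·log(1/(1−σ)) )/η ≤ 4·√(s·T·log(T/s)). -/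
open Real

/-
With `A = s log(T/s)` the tuning `η = √(A/T)` balances the two terms: `ηT = A/η = √(AT)`.
The switching cost is harmless since `log (1/(1-σ)) = log (T/(T-s)) ≤ s/(T-s)`, so
`(T-1-s) log (1/(1-σ)) ≤ s`; finally `s/η = √(AT)/log(T/s)` with `log(T/s) ≥ log 2 > 1/2`.
-/

theorem Real.mul_log_div_le_sub {x y : ℝ} (hx : 0 < x) (hy : 0 < y) :
    x * log (y / x) ≤ y - x :=
  calc x * log (y / x) ≤ x * (y / x - 1) := by
        gcongr; exact log_le_sub_one_of_pos (div_pos hy hx)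
    _ = y - x := by field_simp

theorem sqrt_div_mul_div_add_div_sqrt_div {A T c : ℝ} (hA : 0 < A) (hT : 0 < T) (hc : c ≠ 0)
    (b : ℝ) : √(A / T) * T / c + (A + b) / √(A / T) = (1 / c + 1 + b / A) * √(A * T) := by
  have hAT : 0 < A / T := div_pos hA hT
  have hsqrt_pos : 0 < √(A / T) := sqrt_pos.2 hAT
  have hsqrt : √(A * T) = √(A / T) * T := by
    rw [show A * T = A / T * T ^ 2 by field_simp, sqrt_mul hAT.le, sqrt_sq hT.le]
  rw [hsqrt]
  field_simp
  rw [sq_sqrt hAT.le]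
  field_simp
  ring

theorem stmt_8_general (T s : ℝ) (hs1 : 1 ≤ s) (hs2 : s ≤ T / 2)
    (σ η : ℝ) (hσ : σ = s / T) (hη : η = Real.sqrt (s * Real.log (T / s) / T)) :
    η * T / 8 + (s * Real.log (T / s) + (T - 1 - s) * Real.log (1 / (1 - σ))) / η
      ≤ 4 * Real.sqrt (s * T * Real.log (T / s)) := by
  have hs : 0 < s := by linarith
  have hT : 0 < T := by linarith
  have hL : log 2 ≤ log (T / s) := log_le_log two_pos (by rw [le_div_iff₀ hs]; linarith)
  have hL0 : 0 < log (T / s) := (log_pos one_lt_two).trans_le hL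
  have hA : 0 < s * log (T / s) := mul_pos hs hL0
  have hswitch : (T - 1 - s) * log (1 / (1 - σ)) ≤ s := by
    have hσ' : 1 / (1 - σ) = T / (T - s) := by rw [hσ]; field_simp
    have hlog : 0 ≤ log (T / (T - s)) := log_nonneg (by rw [le_div_iff₀ (by linarith)]; linarith)
    calc (T - 1 - s) * log (1 / (1 - σ)) ≤ (T - s) * log (T / (T - s)) := by
          rw [hσ']; gcongr; linarith
      _ ≤ T - (T - s) := mul_log_div_le_sub (by linarith) hT
      _ = s := by ring
  have hη0 : 0 < η := hη ▸ sqrt_pos.2 (div_pos hA hT)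
  calc _ ≤ η * T / 8 + (s * log (T / s) + s) / η := by gcongr
    _ = (1 / 8 + 1 + s / (s * log (T / s))) * √(s * log (T / s) * T) := by
        rw [hη]; exact sqrt_div_mul_div_add_div_sqrt_div hA hT (by norm_num) s
    _ ≤ 4 * √(s * T * log (T / s)) := by
        rw [mul_right_comm, div_mul_cancel_left₀ hs.ne']
        gcongr
        have : 1 / 2 < log (T / s) := by linarith [log_two_gt_d9]
        have : (log (T / s))⁻¹ < 2 := by rw [inv_lt_comm₀ hL0 two_pos]; linarith
        linarith

theorem stmt_8 (T s : ℝ) (hT : 2 ≤ T) (hs1 : 1 ≤ s) (hs2 : s ≤ T / 2)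
    (σ η : ℝ) (hσ : σ = s / T) (hη : η = Real.sqrt (s * Real.log (T / s) / T)) :
    η * T / 8 + (s * Real.log (T / s) + (T - 1 - s) * Real.log (1 / (1 - σ))) / η
      ≤ 4 * Real.sqrt (s * T * Real.log (T / s)) :=
  stmt_8_general T s hs1 hs2 σ η hσ hη
end
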